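/- Assume α > d/2 − 1. There exists a constant c > 0, depending only on α and d, such that for every x ∈ ℝ^d_+ with x_d > 0, every ε > 0, and every y ∈ ℝ^d_+, one has 0 ≤ τ_x(χ_{B^+(0,ε)})(−y', y_d) ≤ c (ε / x_d)^{2α+1}. -/

import Mathlib

open MeasureTheory Real Set
open scoped ENNReal RealInnerProductSpace

noncomputable section

/-- The upper half space `ℝ^{d-1} × (0,∞)` sits inside `Pt d`, the set of pairs
`(x', x_d)` with `x' ∈ ℝ^{d-1}` (Euclidean) and `x_d ∈ ℝ`. -/
abbrev Pt (d : ℕ) : Type := EuclideanSpace ℝ (Fin (d - 1)) × ℝ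

/-- Euclidean norm on `Pt d`. -/
def euclNorm {d : ℕ} (p : Pt d) : ℝ := Real.sqrt (‖p.1‖ ^ 2 + p.2 ^ 2)

/-- The measure `ν_α` on the half space: `dν_α(x) = x_d^{2α+1}/((2π)^{(d-1)/2} 2^α Γ(α+1)) dx`,
supported on `{x_d > 0}`. -/
def nu (α : ℝ) (d : ℕ) : Measure (Pt d) :=
  (((volume : Measure (EuclideanSpace ℝ (Fin (d - 1)))).prod
      ((volume : Measure ℝ).withDensity fun t =>
        ENNReal.ofReal (t ^ (2 * α + 1) /
          ((2 * π) ^ ((d - 1 : ℝ) / 2) * 2 ^ α * Real.Gamma (α + 1))))).restrict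
    {p : Pt d | 0 < p.2})

/-- The half ball `B^+(x,ε)`: intersection of the closed Euclidean ball of radius `ε`
centered at `x` with `ℝ^{d-1} × [0,∞)`. -/
def Bplus {d : ℕ} (x : Pt d) (ε : ℝ) : Set (Pt d) :=
  {p : Pt d | euclNorm (p - x) ≤ ε ∧ 0 ≤ p.2}

/-- The box `C^+(x,ε) = B_{d-1}(x',ε) × (max{0, x_d-ε}, x_d+ε)`. -/
def Cplus {d : ℕ} (x : Pt d) (ε : ℝ) : Set (Pt d) :=
  {p : Pt d | ‖p.1 - x.1‖ ≤ ε ∧ p.2 ∈ Set.Ioo (max 0 (x.2 - ε)) (x.2 + ε)}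

/-- The Weinstein kernel `W_α(x_d, y_d, ρ)`. -/
def Wker (α xd yd ρ : ℝ) : ℝ :=
  if |xd - yd| < ρ ∧ ρ < xd + yd then
    Real.Gamma (α + 1) * ((xd + yd) ^ 2 - ρ ^ 2) ^ (α - 1 / 2) *
      (ρ ^ 2 - (xd - yd) ^ 2) ^ (α - 1 / 2) /
      (2 ^ (2 * α - 1) * Real.sqrt π * Real.Gamma (α + 1 / 2) * (xd * yd * ρ) ^ (2 * α))
  else 0

/-- The Weinstein translate `τ_x(χ_{B^+(0,ε)})(-y', y_d)
  = ∫_0^∞ χ_{B^+(0,ε)}(x'-y', ρ) W_α(x_d, y_d, ρ) ρ^{2α+1} dρ`. -/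
def tauChi (α : ℝ) {d : ℕ} (ε : ℝ) (x y : Pt d) : ℝ :=
  ∫ ρ in Set.Ioi (0 : ℝ),
    (Bplus (0 : Pt d) ε).indicator (fun _ => (1 : ℝ)) (x.1 - y.1, ρ) *
      Wker α x.2 y.2 ρ * ρ ^ (2 * α + 1)

/-- The normalized Bessel function `j_γ` of order `γ > -1/2`, via Poisson's integral
representation. -/
def besselj (γ z : ℝ) : ℝ :=
  Real.Gamma (γ + 1) / (Real.sqrt π * Real.Gamma (γ + 1 / 2)) *
    ∫ t in Set.Icc (-1 : ℝ) 1, (1 - t ^ 2) ^ (γ - 1 / 2) * Real.cos (z * t)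

/-- The Weinstein transform of the characteristic function of `B^+(0,ε)`:
`F_W(χ_{B^+(0,ε)})(λ) = ∫_{B^+(0,ε)} e^{-i⟨y',λ'⟩} j_α(y_d λ_d) dν_α(y)`. -/
def FWchi (α : ℝ) (d : ℕ) (ε : ℝ) (lam : Pt d) : ℂ :=
  ∫ y in Bplus (0 : Pt d) ε,
    Complex.exp (-(Complex.I * ((inner ℝ y.1 lam.1 : ℝ) : ℂ))) *
      ((besselj α (y.2 * lam.2) : ℝ) : ℂ) ∂(nu α d)

/-- The uncentered maximal function `M_α f`. -/
def Mmax (α : ℝ) (d : ℕ) (f : Pt d → ℝ) (x : Pt d) : ℝ≥0∞ :=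
  ⨆ (ε : ℝ) (_ : 0 < ε) (z : Pt d) (_ : z ∈ Bplus x ε),
    ENNReal.ofReal |∫ y, f y * tauChi α ε z y ∂(nu α d)| / nu α d (Bplus (0 : Pt d) ε)

/-- The auxiliary uncentered maximal function `M̃_α f`. -/
def Mtilde (α : ℝ) (d : ℕ) (f : Pt d → ℝ) (x : Pt d) : ℝ≥0∞ :=
  ⨆ (ε : ℝ) (_ : 0 < ε) (z : Pt d) (_ : z ∈ Bplus x ε),
    (∫⁻ y in Bplus z ε, ENNReal.ofReal |f y| ∂(nu α d)) / nu α d (Bplus z ε)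

/-!
The integrand vanishes unless `|x_d - y_d| < ρ ≤ min ε (x_d + y_d)`, and there
`W_α(x_d, y_d, ρ) ρ^{2α+1} = K (x_d y_d)^{-2α} (S - ρ²)^p (ρ² - a)^p ρ` with `p = α - 1/2`,
`S = (x_d + y_d)²`, `a = (x_d - y_d)²` and `K = WkerConst α`. The substitution `u = ρ²` turns
`τ_x χ` into the truncated Beta integral `∫_a^b (S - u)^p (u - a)^p du`, `b = min ε² S`, which is
at most `C_p (S - a)^p (b - a)^{p+1}`. Since `S - a = 4 x_d y_d` and `b - a ≤ 16 ε² y_d / x_d`,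
the powers of `x_d y_d` cancel and leave `(ε / x_d)^{2α+1}`.
-/

section BetaIntegral

variable {p a b S : ℝ}

lemma integrableOn_Ioc_sub_rpow (hp : -1 < p) (hab : a ≤ b) :
    IntegrableOn (fun u => (u - a) ^ p) (Ioc a b) := by
  have h := (intervalIntegral.intervalIntegrable_rpow' (a := 0) (b := b - a) hp).comp_sub_right a
  simp only [zero_add, sub_add_cancel] at h
  exact (intervalIntegrable_iff_integrableOn_Ioc_of_le hab).mp h

lemma integrableOn_Ioc_rsub_rpow (hp : -1 < p) (hab : a ≤ b) :
    IntegrableOn (fun u => (S - u) ^ p) (Ioc a b) := by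
  have h := (intervalIntegral.intervalIntegrable_rpow' (a := S - a) (b := S - b) hp).comp_sub_left S
  simp only [sub_sub_cancel] at h
  exact (intervalIntegrable_iff_integrableOn_Ioc_of_le hab).mp h

lemma integral_Ioc_sub_rpow (hp : -1 < p) (hab : a ≤ b) :
    ∫ u in Ioc a b, (u - a) ^ p = (b - a) ^ (p + 1) / (p + 1) := by
  rw [← intervalIntegral.integral_of_le hab,
    intervalIntegral.integral_comp_sub_right (fun u => u ^ p), integral_rpow (Or.inl hp),
    sub_self, zero_rpow (by linarith), sub_zero]

lemma integral_Ioc_rsub_rpow (hp : -1 < p) (hab : a ≤ b) :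
    ∫ u in Ioc a b, (S - u) ^ p = ((S - a) ^ (p + 1) - (S - b) ^ (p + 1)) / (p + 1) := by
  rw [← intervalIntegral.integral_of_le hab,
    intervalIntegral.integral_comp_sub_left (fun u => u ^ p), integral_rpow (Or.inl hp)]

/-- By subadditivity of `t ↦ t ^ (p + 1)`, as `0 < p + 1 ≤ 1`. -/
lemma integral_Ioc_rsub_rpow_le (hp : -1 < p) (hp0 : p ≤ 0) (hab : a ≤ b) (hbS : b ≤ S) :
    ∫ u in Ioc a b, (S - u) ^ p ≤ (b - a) ^ (p + 1) / (p + 1) := by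
  rw [integral_Ioc_rsub_rpow hp hab]
  refine div_le_div_of_nonneg_right ?_ (by linarith)
  have := rpow_add_le_add_rpow (sub_nonneg.2 hbS) (sub_nonneg.2 hab) (by linarith : 0 ≤ p + 1)
    (by linarith)
  rw [sub_add_sub_cancel] at this
  linarith

lemma rpow_le_two_rpow_neg_mul (hp : p ≤ 0) {L v : ℝ} (hL : 0 < L) (hv : L / 2 ≤ v) :
    v ^ p ≤ 2 ^ (-p) * L ^ p := by
  calc v ^ p ≤ (L / 2) ^ p := rpow_le_rpow_of_nonpos (by positivity) hv hp
    _ = 2 ^ (-p) * L ^ p := by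
      rw [div_rpow hL.le zero_le_two, rpow_neg zero_le_two, div_eq_inv_mul]

lemma rpow_mul_rpow_le_of_nonpos (hp : p ≤ 0) {u : ℝ} (hau : a < u) (huS : u ≤ S) :
    (S - u) ^ p * (u - a) ^ p ≤ 2 ^ (-p) * (S - a) ^ p * ((u - a) ^ p + (S - u) ^ p) := by
  have hL : 0 < S - a := by linarith
  have h₁ : 0 ≤ (u - a) ^ p := rpow_nonneg (by linarith) p
  have h₂ : 0 ≤ (S - u) ^ p := rpow_nonneg (by linarith) p
  rcases le_total (u - a) (S - u) with h | h
  · have := rpow_le_two_rpow_neg_mul hp hL (v := S - u) (by linarith)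
    nlinarith
  · have := rpow_le_two_rpow_neg_mul hp hL (v := u - a) (by linarith)
    nlinarith

lemma rpow_mul_rpow_le_of_nonneg (hp : 0 ≤ p) {u : ℝ} (hau : a ≤ u) (huS : u ≤ S) :
    (S - u) ^ p * (u - a) ^ p ≤ (S - a) ^ p * (u - a) ^ p := by
  gcongr

lemma integrableOn_Ioc_rpow_mul_rpow (hp : -1 < p) (haS : a ≤ S) :
    IntegrableOn (fun u => (S - u) ^ p * (u - a) ^ p) (Ioc a S) := by
  obtain ⟨g, hg, hfg⟩ : ∃ g : ℝ → ℝ, IntegrableOn g (Ioc a S) ∧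
      ∀ u ∈ Ioc a S, (S - u) ^ p * (u - a) ^ p ≤ g u := by
    rcases le_total 0 p with hp0 | hp0
    · exact ⟨_, (integrableOn_Ioc_sub_rpow hp haS).const_mul ((S - a) ^ p),
        fun u hu => rpow_mul_rpow_le_of_nonneg hp0 hu.1.le hu.2⟩
    · exact ⟨_, ((integrableOn_Ioc_sub_rpow hp haS).add
          (integrableOn_Ioc_rsub_rpow (S := S) hp haS)).const_mul (2 ^ (-p) * (S - a) ^ p),
        fun u hu => rpow_mul_rpow_le_of_nonpos hp0 hu.1 hu.2⟩
  refine hg.mono' (by fun_prop) (ae_restrict_of_forall_mem measurableSet_Ioc fun u hu => ?_)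
  rw [Real.norm_of_nonneg
    (mul_nonneg (rpow_nonneg (by linarith [hu.2]) _) (rpow_nonneg (by linarith [hu.1]) _))]
  exact hfg u hu

lemma setIntegral_Ioc_rpow_mul_rpow_le (hp : -1 < p) (hab : a ≤ b) (hbS : b ≤ S) :
    ∫ u in Ioc a b, (S - u) ^ p * (u - a) ^ p ≤
      2 ^ (1 + |p|) / (p + 1) * (S - a) ^ p * (b - a) ^ (p + 1) := by
  have hp1 : 0 < p + 1 := by linarith
  have hf0 : 0 ≤ᵐ[volume.restrict (Ioc a b)] fun u => (S - u) ^ p * (u - a) ^ p :=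
    ae_restrict_of_forall_mem measurableSet_Ioc fun u hu =>
      mul_nonneg (rpow_nonneg (by linarith [hu.2]) _) (rpow_nonneg (by linarith [hu.1]) _)
  have hL : 0 ≤ (S - a) ^ p := rpow_nonneg (by linarith) _
  have ht : 0 ≤ (b - a) ^ (p + 1) := rpow_nonneg (by linarith) _
  rcases le_total 0 p with hp0 | hp0
  · calc ∫ u in Ioc a b, (S - u) ^ p * (u - a) ^ p
        ≤ ∫ u in Ioc a b, (S - a) ^ p * (u - a) ^ p :=
          integral_mono_of_nonneg hf0 ((integrableOn_Ioc_sub_rpow hp hab).const_mul _)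
            (ae_restrict_of_forall_mem measurableSet_Ioc fun u hu =>
              rpow_mul_rpow_le_of_nonneg hp0 hu.1.le (hu.2.trans hbS))
      _ = 1 / (p + 1) * (S - a) ^ p * (b - a) ^ (p + 1) := by
          rw [integral_const_mul, integral_Ioc_sub_rpow hp hab]; ring
      _ ≤ 2 ^ (1 + |p|) / (p + 1) * (S - a) ^ p * (b - a) ^ (p + 1) := by
          gcongr
          exact one_le_rpow one_le_two (by positivity)
  · have hsub := integrableOn_Ioc_sub_rpow hp hab
    have hrsub := integrableOn_Ioc_rsub_rpow (S := S) hp hab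
    calc ∫ u in Ioc a b, (S - u) ^ p * (u - a) ^ p
        ≤ ∫ u in Ioc a b, 2 ^ (-p) * (S - a) ^ p * ((u - a) ^ p + (S - u) ^ p) :=
          integral_mono_of_nonneg hf0 ((hsub.add hrsub).const_mul _)
            (ae_restrict_of_forall_mem measurableSet_Ioc fun u hu =>
              rpow_mul_rpow_le_of_nonpos hp0 hu.1 (hu.2.trans hbS))
      _ = 2 ^ (-p) * (S - a) ^ p *
            ((b - a) ^ (p + 1) / (p + 1) + ∫ u in Ioc a b, (S - u) ^ p) := by
          rw [integral_const_mul, integral_add hsub hrsub, integral_Ioc_sub_rpow hp hab]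
      _ ≤ 2 ^ (-p) * (S - a) ^ p *
            ((b - a) ^ (p + 1) / (p + 1) + (b - a) ^ (p + 1) / (p + 1)) := by
          gcongr
          exact integral_Ioc_rsub_rpow_le hp hp0 hab hbS
      _ = 2 ^ (1 + |p|) / (p + 1) * (S - a) ^ p * (b - a) ^ (p + 1) := by
          rw [abs_of_nonpos hp0, rpow_add two_pos, rpow_one]; ring

end BetaIntegral

lemma integral_Ioi_comp_sq_mul (g : ℝ → ℝ) :
    ∫ ρ in Ioi 0, g (ρ ^ 2) * ρ = (∫ u in Ioi 0, g u) / 2 := by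
  rw [← integral_comp_rpow_Ioi g two_ne_zero, ← integral_div]
  refine setIntegral_congr_fun measurableSet_Ioi fun ρ _ => ?_
  rw [smul_eq_mul, rpow_two, abs_two, show (2 : ℝ) - 1 = 1 by norm_num, rpow_one]
  ring

lemma integrableOn_Ioi_comp_sq_mul_iff (g : ℝ → ℝ) :
    IntegrableOn (fun ρ => g (ρ ^ 2) * ρ) (Ioi 0) ↔ IntegrableOn g (Ioi 0) := by
  rw [← integrableOn_Ioi_comp_rpow_iff' g two_ne_zero]
  simp only [rpow_two, smul_eq_mul, show (2 : ℝ) - 1 = 1 by norm_num, rpow_one, mul_comm]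

def WkerConst (α : ℝ) : ℝ :=
  Real.Gamma (α + 1) / (2 ^ (2 * α - 1) * Real.sqrt π * Real.Gamma (α + 1 / 2))

lemma WkerConst_pos {α : ℝ} (hα : -1 / 2 < α) : 0 < WkerConst α := by
  have := Real.Gamma_pos_of_pos (by linarith : 0 < α + 1)
  have := Real.Gamma_pos_of_pos (by linarith : 0 < α + 1 / 2)
  unfold WkerConst
  positivity

lemma pos_and_pos_of_abs_sub_lt_add {a b : ℝ} (h : |a - b| < a + b) : 0 < a ∧ 0 < b := by
  have := abs_lt.mp h
  constructor <;> linarith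

lemma Wker_mul_rpow_eq {α xd yd ρ : ℝ} (h₁ : |xd - yd| < ρ) (h₂ : ρ < xd + yd) :
    Wker α xd yd ρ * ρ ^ (2 * α + 1) = WkerConst α / (xd * yd) ^ (2 * α) *
      (((xd + yd) ^ 2 - ρ ^ 2) ^ (α - 1 / 2) * (ρ ^ 2 - (xd - yd) ^ 2) ^ (α - 1 / 2)) * ρ := by
  obtain ⟨hx, hy⟩ := pos_and_pos_of_abs_sub_lt_add (h₁.trans h₂)
  have hρ : 0 < ρ := (abs_nonneg _).trans_lt h₁
  rw [Wker, if_pos ⟨h₁, h₂⟩, WkerConst, mul_rpow (by positivity) hρ.le, rpow_add hρ, rpow_one]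
  have := (rpow_pos_of_pos hρ (2 * α)).ne'
  field_simp

lemma Wker_nonneg {α : ℝ} (hα : -1 / 2 < α) (xd yd ρ : ℝ) : 0 ≤ Wker α xd yd ρ := by
  unfold Wker
  split_ifs with h
  · obtain ⟨hx, hy⟩ := pos_and_pos_of_abs_sub_lt_add (h.1.trans h.2)
    have := Real.Gamma_pos_of_pos (by linarith : 0 < α + 1)
    have := Real.Gamma_pos_of_pos (by linarith : 0 < α + 1 / 2)
    have hρ : 0 < ρ := (abs_nonneg _).trans_lt h.1
    have : 0 ≤ (xd + yd) ^ 2 - ρ ^ 2 := by nlinarith [h.2]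
    have : 0 ≤ ρ ^ 2 - (xd - yd) ^ 2 := by nlinarith [sq_abs (xd - yd), abs_nonneg (xd - yd), h.1]
    positivity
  · exact le_rfl

lemma le_of_mem_Bplus_zero {d : ℕ} {v : EuclideanSpace ℝ (Fin (d - 1))} {ρ ε : ℝ}
    (h : ((v, ρ) : Pt d) ∈ Bplus 0 ε) : ρ ≤ ε := by
  obtain ⟨h, hρ⟩ := h
  calc ρ = Real.sqrt (ρ ^ 2) := (Real.sqrt_sq hρ).symm
    _ ≤ Real.sqrt (‖v‖ ^ 2 + ρ ^ 2) := Real.sqrt_le_sqrt (le_add_of_nonneg_left (sq_nonneg _))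
    _ ≤ ε := by simpa [euclNorm] using h

lemma tauChi_nonneg {α : ℝ} (hα : -1 / 2 < α) {d : ℕ} (ε : ℝ) (x y : Pt d) :
    0 ≤ tauChi α ε x y :=
  setIntegral_nonneg measurableSet_Ioi fun _ hρ =>
    mul_nonneg (mul_nonneg (indicator_nonneg (fun _ _ => zero_le_one) _) (Wker_nonneg hα _ _ _))
      (rpow_nonneg (le_of_lt hρ) _)

lemma tauChi_integrand_le {α : ℝ} (hα : -1 / 2 < α) {d : ℕ} {ε xd yd ρ : ℝ}
    (v : EuclideanSpace ℝ (Fin (d - 1))) (hx : 0 ≤ xd) (hy : 0 ≤ yd) (hρ : 0 < ρ) :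
    (Bplus (0 : Pt d) ε).indicator (fun _ => (1 : ℝ)) (v, ρ) * Wker α xd yd ρ * ρ ^ (2 * α + 1) ≤
      WkerConst α / (xd * yd) ^ (2 * α) *
        (Ioc ((xd - yd) ^ 2) (min (ε ^ 2) ((xd + yd) ^ 2))).indicator
          (fun u => ((xd + yd) ^ 2 - u) ^ (α - 1 / 2) * (u - (xd - yd) ^ 2) ^ (α - 1 / 2))
          (ρ ^ 2) * ρ := by
  set s := Ioc ((xd - yd) ^ 2) (min (ε ^ 2) ((xd + yd) ^ 2))
  set f := fun u => ((xd + yd) ^ 2 - u) ^ (α - 1 / 2) * (u - (xd - yd) ^ 2) ^ (α - 1 / 2)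
  have hrhs : 0 ≤ WkerConst α / (xd * yd) ^ (2 * α) * s.indicator f (ρ ^ 2) * ρ := by
    refine mul_nonneg (mul_nonneg ?_ (indicator_nonneg (fun u hu => ?_) _)) hρ.le
    · exact div_nonneg (WkerConst_pos hα).le (rpow_nonneg (mul_nonneg hx hy) _)
    · exact mul_nonneg (rpow_nonneg (by linarith [hu.2, min_le_right (ε ^ 2) ((xd + yd) ^ 2)]) _)
        (rpow_nonneg (by linarith [hu.1]) _)
  by_cases hB : ((v, ρ) : Pt d) ∈ Bplus 0 ε
  swap
  · simpa [indicator_of_notMem hB] using hrhs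
  by_cases hW : |xd - yd| < ρ ∧ ρ < xd + yd
  swap
  · simpa [Wker, hW] using hrhs
  have hmem : ρ ^ 2 ∈ s := by
    refine ⟨?_, le_min ?_ ?_⟩
    · simpa only [sq_abs] using pow_lt_pow_left₀ hW.1 (abs_nonneg _) two_ne_zero
    · exact pow_le_pow_left₀ hρ.le (le_of_mem_Bplus_zero hB) 2
    · exact pow_le_pow_left₀ hρ.le hW.2.le 2
  rw [indicator_of_mem hB, indicator_of_mem hmem, one_mul, Wker_mul_rpow_eq hW.1 hW.2]

lemma tauChi_le_setIntegral {α : ℝ} (hα : -1 / 2 < α) {d : ℕ} (ε : ℝ) (x y : Pt d)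
    (hx : 0 ≤ x.2) (hy : 0 ≤ y.2) :
    tauChi α ε x y ≤ WkerConst α / (2 * (x.2 * y.2) ^ (2 * α)) *
      ∫ u in Ioc ((x.2 - y.2) ^ 2) (min (ε ^ 2) ((x.2 + y.2) ^ 2)),
        ((x.2 + y.2) ^ 2 - u) ^ (α - 1 / 2) * (u - (x.2 - y.2) ^ 2) ^ (α - 1 / 2) := by
  set K := WkerConst α / (x.2 * y.2) ^ (2 * α)
  set s := Ioc ((x.2 - y.2) ^ 2) (min (ε ^ 2) ((x.2 + y.2) ^ 2))
  set f := fun u => ((x.2 + y.2) ^ 2 - u) ^ (α - 1 / 2) * (u - (x.2 - y.2) ^ 2) ^ (α - 1 / 2)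
  have hf : IntegrableOn f s :=
    (integrableOn_Ioc_rpow_mul_rpow (by linarith) (by nlinarith)).mono_set
      (Ioc_subset_Ioc_right (min_le_right _ _))
  have hg : IntegrableOn (fun u => K * s.indicator f u) (Ioi 0) :=
    ((hf.integrable_indicator measurableSet_Ioc).const_mul K).integrableOn
  calc tauChi α ε x y ≤ ∫ ρ in Ioi 0, K * s.indicator f (ρ ^ 2) * ρ :=
        integral_mono_of_nonneg
          (ae_restrict_of_forall_mem measurableSet_Ioi fun _ hρ =>
            mul_nonneg (mul_nonneg (indicator_nonneg (fun _ _ => zero_le_one) _)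
              (Wker_nonneg hα _ _ _)) (rpow_nonneg (le_of_lt hρ) _))
          ((integrableOn_Ioi_comp_sq_mul_iff _).2 hg)
          (ae_restrict_of_forall_mem measurableSet_Ioi fun _ hρ =>
            tauChi_integrand_le hα _ hx hy hρ)
    _ = (∫ u in Ioi 0, K * s.indicator f u) / 2 :=
        integral_Ioi_comp_sq_mul (fun u => K * s.indicator f u)
    _ = WkerConst α / (2 * (x.2 * y.2) ^ (2 * α)) * ∫ u in s, f u := by
      rw [integral_const_mul, setIntegral_indicator measurableSet_Ioc,
        inter_eq_right.2 (Ioc_subset_Ioi_self.trans (Ioi_subset_Ioi (sq_nonneg _)))]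
      ring

/-- If `x ≤ 2y` the left side is at most `ε² ≤ 2ε²y/x`. Otherwise it is `≤ 0` unless
`ε > x - y ≥ x/2`, and then it is at most `(x + y)² - (x - y)² = 4xy ≤ 16ε²y/x`. -/
lemma min_sq_sub_sq_le {x y : ℝ} (hx : 0 < x) (hy : 0 < y) (ε : ℝ) :
    min (ε ^ 2) ((x + y) ^ 2) - (x - y) ^ 2 ≤ (4 * ε / x) ^ 2 * (x * y) := by
  rw [div_pow, div_mul_eq_mul_div, le_div_iff₀ (by positivity)]
  have h₁ := min_le_left (ε ^ 2) ((x + y) ^ 2)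
  have h₂ := min_le_right (ε ^ 2) ((x + y) ^ 2)
  have hx2 : 0 ≤ x ^ 2 := sq_nonneg x
  have hxy0 : 0 ≤ x * y := by positivity
  rcases le_total x (2 * y) with hxy | hxy
  · have hD : min (ε ^ 2) ((x + y) ^ 2) - (x - y) ^ 2 ≤ ε ^ 2 := by
      linarith [sq_nonneg (x - y)]
    nlinarith [mul_le_mul_of_nonneg_right hD hx2,
      mul_nonneg (mul_nonneg (sq_nonneg ε) hx.le) (sub_nonneg.2 hxy)]
  · rcases le_total (ε ^ 2) ((x - y) ^ 2) with hε | hε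
    · nlinarith [mul_nonneg (sq_nonneg ε) hxy0]
    · have hx4 : x ^ 2 ≤ 4 * ε ^ 2 := by nlinarith
      nlinarith [mul_le_mul_of_nonneg_right h₂ hx2, mul_le_mul_of_nonneg_left hx4 hxy0]

lemma rpow_mul_rpow_div_rpow {α X t : ℝ} (hX : 0 < X) (ht : 0 ≤ t) :
    (4 * X) ^ (α - 1 / 2) * (t ^ 2 * X) ^ (α - 1 / 2 + 1) / X ^ (2 * α) =
      4 ^ (α - 1 / 2) * t ^ (2 * α + 1) := by
  rw [mul_rpow zero_le_four hX.le, mul_rpow (sq_nonneg t) hX.le, ← rpow_natCast, ← rpow_mul ht]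
  have hXα : X ^ (α - 1 / 2) * X ^ (α - 1 / 2 + 1) = X ^ (2 * α) := by
    rw [← rpow_add hX]; ring_nf
  calc _ = 4 ^ (α - 1 / 2) * t ^ (2 * α + 1) *
        (X ^ (α - 1 / 2) * X ^ (α - 1 / 2 + 1) / X ^ (2 * α)) := by ring_nf
    _ = _ := by rw [hXα, div_self (rpow_pos_of_pos hX (2 * α)).ne', mul_one]

def tauChiConst (α : ℝ) : ℝ :=
  WkerConst α / 2 * (2 ^ (1 + |α - 1 / 2|) / (α - 1 / 2 + 1)) * 4 ^ (α - 1 / 2) * 4 ^ (2 * α + 1)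

lemma tauChiConst_pos {α : ℝ} (hα : -1 / 2 < α) : 0 < tauChiConst α := by
  have := WkerConst_pos hα
  have : 0 < α - 1 / 2 + 1 := by linarith
  unfold tauChiConst
  positivity

lemma tauChi_le {α : ℝ} (hα : -1 / 2 < α) {d : ℕ} {ε : ℝ} (hε : 0 ≤ ε) {x y : Pt d}
    (hx : 0 < x.2) (hy : 0 < y.2) :
    tauChi α ε x y ≤ tauChiConst α * (ε / x.2) ^ (2 * α + 1) := by
  have hxy : 0 < x.2 * y.2 := mul_pos hx hy
  have hK : 0 ≤ WkerConst α / (2 * (x.2 * y.2) ^ (2 * α)) := by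
    have := WkerConst_pos hα
    positivity
  refine (tauChi_le_setIntegral hα ε x y hx.le hy.le).trans ?_
  rcases le_or_gt ((x.2 - y.2) ^ 2) (min (ε ^ 2) ((x.2 + y.2) ^ 2)) with hab | hba
  swap
  · rw [Ioc_eq_empty (not_lt.2 hba.le), Measure.restrict_empty, integral_zero_measure, mul_zero]
    have := tauChiConst_pos hα
    positivity
  have hsq : (x.2 + y.2) ^ 2 - (x.2 - y.2) ^ 2 = 4 * (x.2 * y.2) := by ring
  have h₄ : (4 * ε / x.2) ^ (2 * α + 1) = 4 ^ (2 * α + 1) * (ε / x.2) ^ (2 * α + 1) := by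
    rw [mul_div_assoc, mul_rpow zero_le_four (by positivity)]
  calc _ ≤ WkerConst α / (2 * (x.2 * y.2) ^ (2 * α)) *
        (2 ^ (1 + |α - 1 / 2|) / (α - 1 / 2 + 1) * (4 * (x.2 * y.2)) ^ (α - 1 / 2) *
          ((4 * ε / x.2) ^ 2 * (x.2 * y.2)) ^ (α - 1 / 2 + 1)) := by
        gcongr
        refine (setIntegral_Ioc_rpow_mul_rpow_le (by linarith) hab (min_le_right _ _)).trans ?_
        rw [hsq]
        gcongr
        · have : 0 < α - 1 / 2 + 1 := by linarith
          positivity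
        · linarith
        · exact min_sq_sub_sq_le hx hy ε
    _ = WkerConst α / 2 * (2 ^ (1 + |α - 1 / 2|) / (α - 1 / 2 + 1)) *
          ((4 * (x.2 * y.2)) ^ (α - 1 / 2) *
            ((4 * ε / x.2) ^ 2 * (x.2 * y.2)) ^ (α - 1 / 2 + 1) / (x.2 * y.2) ^ (2 * α)) := by
        ring
    _ = tauChiConst α * (ε / x.2) ^ (2 * α + 1) := by
        rw [rpow_mul_rpow_div_rpow hxy (by positivity), h₄, tauChiConst]
        ring

/-- Assume `α > d/2 - 1`. There is `c > 0` depending only on `α` and `d`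
such that for every `x ∈ ℝ^d_+` with `x_d > 0`, every `ε > 0` and every `y ∈ ℝ^d_+`,
`0 ≤ τ_x(χ_{B^+(0,ε)})(-y', y_d) ≤ c (ε/x_d)^{2α+1}`. -/
theorem tauChi_pointwise_bound (α : ℝ) (d : ℕ) (hd : 2 ≤ d) (hα : (d : ℝ) / 2 - 1 < α) :
    ∃ c : ℝ, 0 < c ∧ ∀ x : Pt d, 0 < x.2 → ∀ ε : ℝ, 0 < ε → ∀ y : Pt d, 0 < y.2 →
      0 ≤ tauChi α ε x y ∧ tauChi α ε x y ≤ c * (ε / x.2) ^ (2 * α + 1) := by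
  have hα' : -1 / 2 < α := by
    have : (2 : ℝ) ≤ d := by exact_mod_cast hd
    linarith
  exact ⟨tauChiConst α, tauChiConst_pos hα', fun x hx ε hε y hy =>
    ⟨tauChi_nonneg hα' ε x y, tauChi_le hα' hε.le hx hy⟩⟩

end
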